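/- arXiv:2503.16186 — 8 statements merged into one kernel-verified Lean document; each statement's English description precedes it below -/
import Mathlib

section
/- If a finite partial order (V, ⪯) has the property that every pair of elements has a unique least upper bound (i.e., for all x,y the set of minimal common upper bounds of {x,y} has exactly one element), then every nonempty subset A ⊆ V has a unique minimal common upper bound. -/
/-- `z` is a least common ancestor of `A`: a minimal common upper bound. -/
def IsLCA {V : Type*} [PartialOrder V] (A : Set V) (z : V) : Prop :=
  (∀ a ∈ A, a ≤ z) ∧ ∀ w, (∀ a ∈ A, a ≤ w) → w ≤ z → w = z

/-- Any upper bound of `A` lies above some LCA of `A` (finiteness). -/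
lemma exists_lca_le {V : Type*} [Fintype V] [PartialOrder V] (A : Set V) (w : V)
    (hw : ∀ a ∈ A, a ≤ w) : ∃ z, IsLCA A z ∧ z ≤ w := by
  have hwf : WellFoundedLT V := Finite.to_wellFoundedLT
  obtain ⟨z, ⟨hzub, hzw⟩, hmin⟩ :=
    hwf.wf.has_min {u | (∀ a ∈ A, a ≤ u) ∧ u ≤ w} ⟨w, hw, le_refl w⟩
  refine ⟨z, ⟨hzub, ?_⟩, hzw⟩
  intro u hu huz
  by_contra hne
  exact hmin u ⟨hu, le_trans huz hzw⟩ (lt_of_le_of_ne huz hne)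

/-- If every pair has a unique minimal common upper bound, then every nonempty
subset has a unique minimal common upper bound. -/
theorem global_pairwise_lca_implies_global_lca {V : Type*} [Fintype V] [PartialOrder V]
    (h : ∀ x y : V, ∃! z, IsLCA {x, y} z) :
    ∀ A : Set V, A.Nonempty → ∃! z, IsLCA A z := by
  classical
  have hjoin : ∀ x y : V, ∃ j : V, x ≤ j ∧ y ≤ j ∧ ∀ w, x ≤ w → y ≤ w → j ≤ w := by
    intro x y
    obtain ⟨j, hj, huniq⟩ := h x y
    refine ⟨j, hj.1 x (by simp), hj.1 y (by simp), ?_⟩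
    intro w hxw hyw
    obtain ⟨z, hz, hzw⟩ := exists_lca_le {x, y} w (by simp [hxw, hyw])
    rw [← huniq z hz]; exact hzw
  -- every nonempty finset has a least upper bound
  have hfin : ∀ s : Finset V, s.Nonempty →
      ∃ j : V, (∀ a ∈ s, a ≤ j) ∧ ∀ w, (∀ a ∈ s, a ≤ w) → j ≤ w := by
    intro s hs
    induction hs using Finset.Nonempty.cons_induction with
    | singleton a => exact ⟨a, by simp, fun w hw => hw a (by simp)⟩
    | cons a s ha hs ih =>
      obtain ⟨j, hjub, hjle⟩ := ih
      obtain ⟨k, hak, hjk, hkle⟩ := hjoin a j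
      refine ⟨k, ?_, ?_⟩
      · intro b hb
        rcases Finset.mem_cons.mp hb with rfl | hb
        · exact hak
        · exact le_trans (hjub b hb) hjk
      · intro w hw
        exact hkle w (hw a (Finset.mem_cons_self a s))
          (hjle w fun b hb => hw b (Finset.mem_cons_of_mem hb))
  intro A hA
  have hAfin : A.Finite := A.toFinite
  obtain ⟨j, hjub, hjle⟩ := hfin hAfin.toFinset (hAfin.toFinset_nonempty.mpr hA)
  have hjub' : ∀ a ∈ A, a ≤ j := fun a ha => hjub a (hAfin.mem_toFinset.mpr ha)
  have hjle' : ∀ w, (∀ a ∈ A, a ≤ w) → j ≤ w := fun w hw =>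
    hjle w fun a ha => hw a (hAfin.mem_toFinset.mp ha)
  refine ⟨j, ⟨hjub', fun w hw hwj => le_antisymm hwj (hjle' w hw)⟩, ?_⟩
  intro z hz
  exact (hz.2 j hjub' (hjle' z hz.1)).symm
end

section
/- For a finite partial order (V, ⪯), the system of principal lower sets {D(v) : v ∈ V} is closed under nonempty intersections if and only if the system of principal upper sets {A(v) : v ∈ V} is closed under nonempty intersections, where A(v) = {u : v ⪯ u}. -/
lemma aux_meet_to_join {V : Type*} [Fintype V] [PartialOrder V]
    (h : ∀ u v : V, (Set.Iic u ∩ Set.Iic v).Nonempty →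
      ∃ w : V, Set.Iic u ∩ Set.Iic v = Set.Iic w) :
    ∀ u v : V, (Set.Ici u ∩ Set.Ici v).Nonempty →
      ∃ w : V, Set.Ici u ∩ Set.Ici v = Set.Ici w := by
  intro u v ⟨x, hxu, hxv⟩
  simp only [Set.mem_Ici] at hxu hxv
  -- For every finset T, there is a common upper bound m of u,v that is ≤ every
  -- element of T which is a common upper bound of u,v.
  have key : ∀ T : Finset V, ∃ m, u ≤ m ∧ v ≤ m ∧ ∀ t ∈ T, u ≤ t → v ≤ t → m ≤ t := by
    intro T
    classical
    induction T using Finset.induction_on with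
    | empty => exact ⟨x, hxu, hxv, by simp⟩
    | @insert a T _ ih =>
      obtain ⟨m, hum, hvm, hm⟩ := ih
      by_cases hcase : u ≤ a ∧ v ≤ a
      · obtain ⟨w, hw⟩ := h m a ⟨u, Set.mem_inter hum hcase.1⟩
        have hwm : w ≤ m := (hw ▸ (Set.mem_Iic.mpr le_rfl) : w ∈ Set.Iic m ∩ Set.Iic a).1
        have hwa : w ≤ a := (hw ▸ (Set.mem_Iic.mpr le_rfl) : w ∈ Set.Iic m ∩ Set.Iic a).2
        have huw : u ≤ w := Set.mem_Iic.mp (hw ▸ Set.mem_inter (Set.mem_Iic.mpr hum) (Set.mem_Iic.mpr hcase.1) : u ∈ Set.Iic w)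
        have hvw : v ≤ w := Set.mem_Iic.mp (hw ▸ Set.mem_inter (Set.mem_Iic.mpr hvm) (Set.mem_Iic.mpr hcase.2) : v ∈ Set.Iic w)
        refine ⟨w, huw, hvw, ?_⟩
        intro t ht hut hvt
        rcases Finset.mem_insert.mp ht with rfl | ht
        · exact hwa
        · exact le_trans hwm (hm t ht hut hvt)
      · refine ⟨m, hum, hvm, ?_⟩
        intro t ht hut hvt
        rcases Finset.mem_insert.mp ht with rfl | ht
        · exact absurd ⟨hut, hvt⟩ hcase
        · exact hm t ht hut hvt
  obtain ⟨m, hum, hvm, hm⟩ := key Finset.univ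
  refine ⟨m, Set.Subset.antisymm ?_ ?_⟩
  · rintro t ⟨htu, htv⟩
    exact Set.mem_Ici.mpr (hm t (Finset.mem_univ t) htu htv)
  · intro t ht
    exact ⟨le_trans hum ht, le_trans hvm ht⟩

/-- The descendant system (principal lower sets) of a finite poset is closed
under nonempty intersections iff the ancestor system (principal upper sets) is. -/
theorem descendant_closed_iff_ancestor_closed {V : Type*} [Fintype V] [PartialOrder V] :
    (∀ u v : V, (Set.Iic u ∩ Set.Iic v).Nonempty →
      ∃ w : V, Set.Iic u ∩ Set.Iic v = Set.Iic w) ↔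
    (∀ u v : V, (Set.Ici u ∩ Set.Ici v).Nonempty →
      ∃ w : V, Set.Ici u ∩ Set.Ici v = Set.Ici w) := by
  constructor
  · exact aux_meet_to_join
  · intro h
    exact aux_meet_to_join (V := Vᵒᵈ) h
end

section
/- Let (V, ⪯) be a finite partial order with greatest element ⊤. The system of principal upper sets {A(v) : v ∈ V} is closed under nonempty intersections if and only if the system of intervals {B(u,v) : u,v ∈ V}, where B(u,v) = {w : v ⪯ w ⪯ u}, is closed under nonempty intersections. -/
/-! If pairwise intersections of principal upper sets are principal, then (using `⊤` to make them
nonempty) any two elements `x, y` have a join `x ⊔ y`, generating `Ici x ∩ Ici y`. The intersection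
`S = [a, b] ∩ [c, d]` is then `Ici (a ⊔ c) ∩ Iic b ∩ Iic d`, and it is closed under joins, so as a
finite nonempty directed set it has a greatest element `q`, whence `S = [a ⊔ c, q]`. Conversely,
`Ici u ∩ Ici v = [u, ⊤] ∩ [v, ⊤]`, and an interval containing `⊤` is a principal upper set. -/

open Set

section

variable {α : Type*} [PartialOrder α]

theorem DirectedOn.exists_isGreatest_of_finite {s : Set α} (hd : DirectedOn (· ≤ ·) s)
    (hs : s.Finite) (hne : s.Nonempty) : ∃ m, IsGreatest s m := by
  obtain ⟨m, hm⟩ := hs.exists_maximal hne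
  exact ⟨m, hm.1, hd.is_top_of_is_max hm.1 fun _ ha hma => hm.2 ha hma⟩

theorem directedOn_Icc_inter_Icc (hjoin : ∀ u v : α, ∃ w, Ici u ∩ Ici v = Ici w)
    (a b c d : α) : DirectedOn (· ≤ ·) (Icc a b ∩ Icc c d) := by
  intro x hx y hy
  obtain ⟨z, hz⟩ := hjoin x y
  have hxyz : z ∈ Ici x ∩ Ici y := hz ▸ self_mem_Ici
  have hz_le : ∀ t, x ≤ t → y ≤ t → z ≤ t := fun t hxt hyt =>
    (hz ▸ ⟨hxt, hyt⟩ : t ∈ Ici z)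
  exact ⟨z, ⟨⟨hx.1.1.trans hxyz.1, hz_le b hx.1.2 hy.1.2⟩,
    ⟨hx.2.1.trans hxyz.1, hz_le d hx.2.2 hy.2.2⟩⟩, hxyz.1, hxyz.2⟩

theorem exists_Icc_inter_Icc_eq_Icc [Finite α] (hjoin : ∀ u v : α, ∃ w, Ici u ∩ Ici v = Ici w)
    {a b c d : α} (hne : (Icc a b ∩ Icc c d).Nonempty) :
    ∃ p q, Icc a b ∩ Icc c d = Icc p q := by
  obtain ⟨p, hp⟩ := hjoin a c
  obtain ⟨q, hq, hq_ge⟩ :=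
    (directedOn_Icc_inter_Icc hjoin a b c d).exists_isGreatest_of_finite (toFinite _) hne
  have hS : Icc a b ∩ Icc c d = Ici p ∩ (Iic b ∩ Iic d) := by
    rw [← hp]
    ext x
    simp only [mem_inter_iff, mem_Icc, mem_Ici, mem_Iic]
    tauto
  refine ⟨p, q, Subset.antisymm (fun x hx => ⟨(hS ▸ hx).1, hq_ge hx⟩) ?_⟩
  rintro x ⟨hpx, hxq⟩
  rw [hS]
  exact ⟨hpx, hxq.trans hq.1.2, hxq.trans hq.2.2⟩

theorem Icc_eq_Ici_of_top_mem [OrderTop α] {p q : α} (h : ⊤ ∈ Icc p q) : Icc p q = Ici p := by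
  rw [top_le_iff.mp h.2, Icc_top]
end

/-- For a finite poset with greatest element, the ancestor system (principal
upper sets) is closed under nonempty intersections iff the intermediary system
(intervals `B(u,v) = {w : v ⪯ w ⪯ u}`) is closed under nonempty intersections. -/
theorem ancestor_closed_iff_intermediary_closed {V : Type*} [Fintype V]
    [PartialOrder V] [OrderTop V] :
    (∀ u v : V, (Set.Ici u ∩ Set.Ici v).Nonempty →
      ∃ w : V, Set.Ici u ∩ Set.Ici v = Set.Ici w) ↔
    (∀ a b c d : V, (Set.Icc a b ∩ Set.Icc c d).Nonempty →
      ∃ p q : V, Set.Icc a b ∩ Set.Icc c d = Set.Icc p q) := by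
  constructor
  · intro h a b c d hne
    exact exists_Icc_inter_Icc_eq_Icc (fun u v => h u v ⟨⊤, le_top, le_top⟩) hne
  · intro h u v _
    obtain ⟨p, q, hpq⟩ := h u ⊤ v ⊤ ⟨⊤, ⟨le_top, le_rfl⟩, le_top, le_rfl⟩
    rw [Icc_top, Icc_top] at hpq
    exact ⟨p, hpq.trans (Icc_eq_Ici_of_top_mem (hpq ▸ ⟨le_top, le_top⟩))⟩
end

section
/- Let (V, ⪯) be a finite join-semilattice with greatest element, and let L ⊆ V be the set of minimal elements. Then the clustering system ℭ = {C(v) : v ∈ V}, where C(v) = D(v) ∩ L, is closed: for any u,v ∈ V, C(u) ∩ C(v) is empty or equals C(w) for some w ∈ V. -/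
/-- In a finite join-semilattice with greatest element, the clustering system
`C(v) = D(v) ∩ L` (with `L` the minimal elements) is closed: nonempty
intersections of two clusters are clusters. -/
theorem clustering_system_closed_of_joinSemilattice {V : Type*} [Fintype V]
    [SemilatticeSup V] [OrderTop V] (u v : V)
    (hne : ({x : V | (∀ y, y ≤ x → y = x) ∧ x ≤ u} ∩
            {x : V | (∀ y, y ≤ x → y = x) ∧ x ≤ v}).Nonempty) :
    ∃ w : V, {x : V | (∀ y, y ≤ x → y = x) ∧ x ≤ u} ∩
             {x : V | (∀ y, y ≤ x → y = x) ∧ x ≤ v} =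
             {x : V | (∀ y, y ≤ x → y = x) ∧ x ≤ w} := by
  classical
  obtain ⟨x₀, ⟨hm, hu⟩, _, hv⟩ := hne
  set S : Finset V := Finset.univ.filter (fun z => z ≤ u ∧ z ≤ v) with hS
  have hSne : S.Nonempty := ⟨x₀, by simp [hS, hu, hv]⟩
  refine ⟨S.sup' hSne id, ?_⟩
  ext x
  simp only [Set.mem_inter_iff, Set.mem_setOf_eq]
  constructor
  · rintro ⟨⟨hmin, hxu⟩, _, hxv⟩
    exact ⟨hmin, Finset.le_sup' id (by simp [hS, hxu, hxv])⟩
  · rintro ⟨hmin, hxw⟩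
    have hwu : S.sup' hSne id ≤ u := Finset.sup'_le _ _ (fun z hz => (by simpa [hS] using hz : z ≤ u ∧ z ≤ v).1)
    have hwv : S.sup' hSne id ≤ v := Finset.sup'_le _ _ (fun z hz => (by simpa [hS] using hz : z ≤ u ∧ z ≤ v).2)
    exact ⟨⟨hmin, hxw.trans hwu⟩, hmin, hxw.trans hwv⟩
end

section
/- Let (V, ⪯) be a finite poset with minimal elements L, satisfying (PCC): for all u,v ∈ V, u and v are comparable if and only if C(u) ⊆ C(v) or C(v) ⊆ C(u), where C(w) = {x ∈ L : x ⪯ w}. If {C(v) : v ∈ V} contains L (is rooted), then V has a greatest element. -/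
/-- A finite poset satisfying (PCC) whose clustering system is rooted has a
greatest element. -/
theorem greatest_of_PCC_rooted {V : Type*} [Fintype V] [PartialOrder V]
    (C : V → Set V)
    (hC : ∀ v : V, C v = {x : V | (∀ y, y ≤ x → y = x) ∧ x ≤ v})
    (pcc : ∀ u v : V, (u ≤ v ∨ v ≤ u) ↔ (C u ⊆ C v ∨ C v ⊆ C u))
    (rooted : ∃ v : V, C v = {x : V | ∀ y, y ≤ x → y = x}) :
    ∃ t : V, ∀ w : V, w ≤ t := by
  obtain ⟨v, hv⟩ := rooted
  obtain ⟨t, hvt, ht⟩ := Finite.exists_le_maximal (le_refl v)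
  have hCt : C t = {x : V | ∀ y, y ≤ x → y = x} := by
    apply Set.Subset.antisymm
    · intro x hx
      rw [hC t] at hx
      exact hx.1
    · intro x hx
      rw [hC t]
      have : x ∈ C v := by rw [hv]; exact hx
      rw [hC v] at this
      exact ⟨this.1, this.2.trans hvt⟩
  refine ⟨t, fun w => ?_⟩
  have hsub : C w ⊆ C t := by
    intro x hx
    rw [hC w] at hx
    rw [hCt]
    exact hx.1
  rcases (pcc w t).mpr (Or.inl hsub) with h | h
  · exact h
  · exact ht.2 (hvt.trans h) h
end

section
/- Let (V, ⪯) be a finite poset with greatest element and minimal-element set L, satisfying (PCC). Then (V, ⪯) is a join-semilattice if and only if the clustering system {C(v) : v ∈ V} is closed under nonempty intersections, where C(v) = {x ∈ L : x ⪯ v}. -/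
/-!
If all pairwise joins exist, then so does the join of the finitely many common lower bounds of
`u` and `v` (there is one when `C u ∩ C v` is nonempty). It is the meet of `u` and `v`, and its
cluster is `C u ∩ C v`.

Conversely, joins of comparable elements are trivial. For incomparable `a`, `b`, take a minimal
upper bound `z` and any upper bound `w`. Closure gives `t` with `C t = C z ∩ C w ⊇ C a ∪ C b`,
so by (PCC) `t` is comparable with `a` and `b`; `t ≤ a` would give `C b ⊆ C a`, so `t` is an
upper bound, and by minimality `z ≤ t`. Hence `C z ⊆ C w`, so `z` and `w` are comparable and
minimality gives `z ≤ w`.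
-/

open Set

section Preorder

variable {V : Type*} [Preorder V]

def cluster (v : V) : Set V := {x | IsMin x ∧ x ≤ v}

lemma cluster_mono : Monotone (cluster : V → Set V) :=
  fun _ _ huv _ hx => ⟨hx.1, hx.2.trans huv⟩

lemma cluster_inter_eq_of_isGLB {u v z : V} (h : IsGLB {u, v} z) :
    cluster u ∩ cluster v = cluster z := by
  ext x
  constructor
  · rintro ⟨⟨hx, hxu⟩, -, hxv⟩
    exact ⟨hx, h.2 (by simp [hxu, hxv])⟩
  · intro hx
    exact ⟨cluster_mono (h.1 (by simp)) hx, cluster_mono (h.1 (by simp)) hx⟩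

lemma isLUB_pair_iff {a b z : V} :
    IsLUB {a, b} z ↔ a ≤ z ∧ b ≤ z ∧ ∀ w, a ≤ w → b ≤ w → z ≤ w := by
  simp [IsLUB, IsLeast, lowerBounds, and_assoc]

lemma Finset.exists_isLUB_of_forall_isLUB_pair (hpair : ∀ a b : V, ∃ z, IsLUB {a, b} z)
    {s : Finset V} (hs : s.Nonempty) : ∃ z, IsLUB (s : Set V) z := by
  induction hs using Finset.Nonempty.cons_induction with
  | singleton a => exact ⟨a, by simp⟩
  | cons a s _ _ ih =>
    obtain ⟨z, hz⟩ := ih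
    obtain ⟨t, ht⟩ := hpair a z
    refine ⟨t, (isLUB_congr ?_).2 ht⟩
    rw [Finset.coe_cons, upperBounds_insert, upperBounds_insert, hz.upperBounds_eq,
      upperBounds_singleton]

lemma exists_cluster_eq_inter_of_forall_isLUB_pair [Finite V]
    (hpair : ∀ a b : V, ∃ z, IsLUB {a, b} z) {u v : V}
    (huv : (cluster u ∩ cluster v).Nonempty) : ∃ w, cluster u ∩ cluster v = cluster w := by
  obtain ⟨x, ⟨-, hxu⟩, -, hxv⟩ := huv
  have hfin := toFinite (lowerBounds ({u, v} : Set V))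
  obtain ⟨z, hz⟩ := Finset.exists_isLUB_of_forall_isLUB_pair hpair (s := hfin.toFinset)
    ⟨x, by simp [hxu, hxv]⟩
  rw [Finite.coe_toFinset, isLUB_lowerBounds] at hz
  exact ⟨z, cluster_inter_eq_of_isGLB hz⟩

lemma le_of_cluster_subset_of_not_comparable
    (hcomp : ∀ u v : V, cluster u ⊆ cluster v → u ≤ v ∨ v ≤ u) {a b t : V}
    (hab : ¬(a ≤ b ∨ b ≤ a)) (ha : cluster a ⊆ cluster t) (hb : cluster b ⊆ cluster t) :
    a ≤ t :=
  (hcomp a t ha).resolve_right fun hta => hab (hcomp b a (hb.trans (cluster_mono hta))).symm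

variable [WellFoundedLT V]

lemma cluster_nonempty (v : V) : (cluster v).Nonempty := by
  obtain ⟨m, hmv, hm⟩ := exists_minimal_le_of_wellFoundedLT (fun _ => True) v trivial
  exact ⟨m, minimal_true.1 hm, hmv⟩

lemma Minimal.isLUB_of_cluster_closed
    (hcomp : ∀ u v : V, cluster u ⊆ cluster v → u ≤ v ∨ v ≤ u)
    (hclosed : ∀ u v : V, (cluster u ∩ cluster v).Nonempty →
      ∃ w, cluster u ∩ cluster v = cluster w)
    {a b z : V} (hab : ¬(a ≤ b ∨ b ≤ a)) (hz : Minimal (· ∈ upperBounds {a, b}) z) :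
    IsLUB {a, b} z := by
  have le_of_comparable {y : V} (hy : y ∈ upperBounds {a, b}) (h : z ≤ y ∨ y ≤ z) : z ≤ y :=
    h.elim id (hz.le_of_le hy)
  refine ⟨hz.prop, fun w hw => ?_⟩
  have subset_inter_of_mem {c : V} (hc : c ∈ ({a, b} : Set V)) :
      cluster c ⊆ cluster z ∩ cluster w :=
    subset_inter (cluster_mono (hz.prop hc)) (cluster_mono (hw hc))
  have ha := subset_inter_of_mem (c := a) (by simp)
  have hb := subset_inter_of_mem (c := b) (by simp)
  obtain ⟨t, ht⟩ := hclosed z w ((cluster_nonempty a).mono ha)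
  rw [ht] at ha hb
  have ht_ub : t ∈ upperBounds {a, b} := by
    simp only [mem_upperBounds, mem_insert_iff, mem_singleton_iff, forall_eq_or_imp, forall_eq]
    exact ⟨le_of_cluster_subset_of_not_comparable hcomp hab ha hb,
      le_of_cluster_subset_of_not_comparable hcomp (fun h => hab h.symm) hb ha⟩
  have hzt : z ≤ t := le_of_comparable ht_ub (hcomp t z (ht ▸ inter_subset_left)).symm
  exact le_of_comparable hw (hcomp z w ((cluster_mono hzt).trans (ht ▸ inter_subset_right)))

lemma exists_isLUB_pair_of_cluster_closed [OrderTop V]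
    (hcomp : ∀ u v : V, cluster u ⊆ cluster v → u ≤ v ∨ v ≤ u)
    (hclosed : ∀ u v : V, (cluster u ∩ cluster v).Nonempty →
      ∃ w, cluster u ∩ cluster v = cluster w)
    (a b : V) : ∃ z, IsLUB {a, b} z := by
  by_cases hab : a ≤ b ∨ b ≤ a
  · rcases hab with hab | hba
    · exact ⟨b, isLUB_pair_iff.2 ⟨hab, le_rfl, fun _ _ h => h⟩⟩
    · exact ⟨a, isLUB_pair_iff.2 ⟨le_rfl, hba, fun _ h _ => h⟩⟩
  · obtain ⟨z, -, hz⟩ := exists_minimal_le_of_wellFoundedLT (· ∈ upperBounds {a, b}) ⊤ (by simp)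
    exact ⟨z, hz.isLUB_of_cluster_closed hcomp hclosed hab⟩

end Preorder

/-- A finite poset with greatest element satisfying (PCC) is a join-semilattice
iff its clustering system is closed under nonempty intersections. -/
theorem joinSemilattice_iff_clustering_closed_of_PCC {V : Type*} [Fintype V]
    [PartialOrder V] [OrderTop V]
    (C : V → Set V)
    (hC : ∀ v : V, C v = {x : V | (∀ y, y ≤ x → y = x) ∧ x ≤ v})
    (pcc : ∀ u v : V, (u ≤ v ∨ v ≤ u) ↔ (C u ⊆ C v ∨ C v ⊆ C u)) :
    (∀ a b : V, ∃ z, a ≤ z ∧ b ≤ z ∧ ∀ w, a ≤ w → b ≤ w → z ≤ w) ↔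
    (∀ u v : V, (C u ∩ C v).Nonempty → ∃ w : V, C u ∩ C v = C w) := by
  have hC_eq : C = cluster := by
    ext v x
    rw [hC v]
    exact and_congr_left' ⟨fun h y hy => (h y hy).ge, fun h _ hy => h.eq_of_le hy⟩
  subst hC_eq
  simp only [← isLUB_pair_iff]
  exact ⟨fun hpair _ _ => exists_cluster_eq_inter_of_forall_isLUB_pair hpair,
    exists_isLUB_pair_of_cluster_closed fun u v h => (pcc u v).2 (Or.inl h)⟩
end

section
/- Let (V, ⪯) be a finite poset such that for all distinct u, v ∈ V with u an inner element (not minimal), there exists a minimal element x_u whose only strict upper bounds are the upper bounds of u together with u itself (a 'tree-leaf child' of u). If every pair of minimal elements of V has at most one minimal common upper bound, then every pair of elements of V has at most one minimal common upper bound. -/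
private lemma tlc_reduce {V : Type*} [PartialOrder V]
    (htlc : ∀ u : V, ¬ (∀ y, y ≤ u → y = u) →
      ∃ x : V, (∀ y, y ≤ x → y = x) ∧ x < u ∧ ∀ w, x ≤ w → w = x ∨ u ≤ w)
    (a b z z' : V)
    (hz : a ≤ z ∧ b ≤ z ∧ ∀ w, a ≤ w → b ≤ w → w ≤ z → w = z)
    (hz' : a ≤ z' ∧ b ≤ z' ∧ ∀ w, a ≤ w → b ≤ w → w ≤ z' → w = z') :
    z = z' ∨ ∃ a' : V, (∀ y, y ≤ a' → y = a') ∧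
      (a' ≤ z ∧ b ≤ z ∧ ∀ w, a' ≤ w → b ≤ w → w ≤ z → w = z) ∧
      (a' ≤ z' ∧ b ≤ z' ∧ ∀ w, a' ≤ w → b ≤ w → w ≤ z' → w = z') := by
  obtain ⟨haz, hbz, hzmin⟩ := hz
  obtain ⟨haz', hbz', hz'min⟩ := hz'
  by_cases hamin : ∀ y, y ≤ a → y = a
  · exact Or.inr ⟨a, hamin, ⟨haz, hbz, hzmin⟩, ⟨haz', hbz', hz'min⟩⟩
  obtain ⟨x, hxmin, hxa, hxw⟩ := htlc a hamin
  by_cases hbx : b ≤ x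
  · -- then b = x ≤ a, so a is a common upper bound, forcing z = a = z'
    have hb : b = x := hxmin b hbx
    have hba : b ≤ a := hb ▸ hxa.le
    left
    have h1 : a = z := hzmin a le_rfl hba haz
    have h2 : a = z' := hz'min a le_rfl hba haz'
    exact h1 ▸ h2
  · right
    refine ⟨x, hxmin, ⟨le_trans hxa.le haz, hbz, ?_⟩, ⟨le_trans hxa.le haz', hbz', ?_⟩⟩
    · intro w hxw' hbw hwz
      rcases hxw w hxw' with h | h
      · exact absurd (h ▸ hbw) hbx
      · exact hzmin w h hbw hwz
    · intro w hxw' hbw hwz'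
      rcases hxw w hxw' with h | h
      · exact absurd (h ▸ hbw) hbx
      · exact hz'min w h hbw hwz'

/-- In a "tree-leaf-child" poset (every non-minimal element `u` has a dedicated
minimal element below it whose only strict upper bounds are `u` and the upper
bounds of `u`), uniqueness of minimal common upper bounds for pairs of minimal
elements implies it for all pairs. -/
theorem tlc_pairwise_leaf_lca_implies_pairwise_lca {V : Type*} [Fintype V] [PartialOrder V]
    (htlc : ∀ u : V, ¬ (∀ y, y ≤ u → y = u) →
      ∃ x : V, (∀ y, y ≤ x → y = x) ∧ x < u ∧ ∀ w, x ≤ w → w = x ∨ u ≤ w)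
    (hleaf : ∀ a b : V, (∀ y, y ≤ a → y = a) → (∀ y, y ≤ b → y = b) →
      ∀ z z' : V,
        (a ≤ z ∧ b ≤ z ∧ ∀ w, a ≤ w → b ≤ w → w ≤ z → w = z) →
        (a ≤ z' ∧ b ≤ z' ∧ ∀ w, a ≤ w → b ≤ w → w ≤ z' → w = z') → z = z') :
    ∀ a b : V, ∀ z z' : V,
      (a ≤ z ∧ b ≤ z ∧ ∀ w, a ≤ w → b ≤ w → w ≤ z → w = z) →
      (a ≤ z' ∧ b ≤ z' ∧ ∀ w, a ≤ w → b ≤ w → w ≤ z' → w = z') → z = z' := by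
  intro a b z z' hz hz'
  rcases tlc_reduce htlc a b z z' hz hz' with h | ⟨a', ha'min, hz1, hz1'⟩
  · exact h
  -- swap roles to reduce b
  have hz2 : b ≤ z ∧ a' ≤ z ∧ ∀ w, b ≤ w → a' ≤ w → w ≤ z → w = z :=
    ⟨hz1.2.1, hz1.1, fun w h1 h2 h3 => hz1.2.2 w h2 h1 h3⟩
  have hz2' : b ≤ z' ∧ a' ≤ z' ∧ ∀ w, b ≤ w → a' ≤ w → w ≤ z' → w = z' :=
    ⟨hz1'.2.1, hz1'.1, fun w h1 h2 h3 => hz1'.2.2 w h2 h1 h3⟩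
  rcases tlc_reduce htlc b a' z z' hz2 hz2' with h | ⟨b', hb'min, hz3, hz3'⟩
  · exact h
  exact hleaf a' b' ha'min hb'min z z'
    ⟨hz3.2.1, hz3.1, fun w h1 h2 h3 => hz3.2.2 w h2 h1 h3⟩
    ⟨hz3'.2.1, hz3'.1, fun w h1 h2 h3 => hz3'.2.2 w h2 h1 h3⟩
end

section
/- Let N be a finite DAG in which every vertex has a common ancestor with every other vertex (e.g., a network) and which contains no subdivision of K_{2,2} as a subgraph. Then for every pair of vertices u, v, the set of minimal common upper bounds of {u,v} in the reachability order has exactly one element. -/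
/-- A directed path in the digraph with edge relation `E`, from `a` to `b`. -/
structure DirPath {V : Type*} (E : V → V → Prop) (a b : V) where
  verts : List V
  nonempty : verts ≠ []
  head_eq : verts.head? = some a
  last_eq : verts.getLast? = some b
  chain : verts.Chain' E

/-- The set of vertices of a directed path. -/
def DirPath.vset {V : Type*} {E : V → V → Prop} {a b : V} (p : DirPath E a b) : Set V :=
  {x | x ∈ p.verts}

/-- The digraph `E` contains a subdivision of `K_{2,2}` as a subgraph: two
"roots" `r, r'`, two "leaves" `l, l'`, and four directed paths between them
meeting only at the prescribed endpoints. -/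
def HasK22Subdivision {V : Type*} (E : V → V → Prop) : Prop :=
  ∃ (r r' l l' : V) (p1 : DirPath E r l) (p2 : DirPath E r l')
    (p3 : DirPath E r' l) (p4 : DirPath E r' l'),
    r ≠ r' ∧ l ≠ l' ∧ r ≠ l ∧ r ≠ l' ∧ r' ≠ l ∧ r' ≠ l' ∧
    p1.vset ∩ p2.vset = {r} ∧ p3.vset ∩ p4.vset = {r'} ∧
    p1.vset ∩ p3.vset = {l} ∧ p2.vset ∩ p4.vset = {l'} ∧
    p1.vset ∩ p4.vset = ∅ ∧ p2.vset ∩ p3.vset = ∅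

/-!
A minimal common ancestor `z` of `u` and `v` exists by finiteness and acyclicity. If `z' ≠ z`
is another one, cut a path from `z` to `u` at its first vertex `l` on a path from `z'` to `u`,
and likewise towards `v`, meeting at `l'`. The four paths `z → l`, `z → l'`, `z' → l`, `z' → l'`
form a `K_{2,2}`-subdivision: a vertex on a path from `z` (or `z'`) towards `u` and on one towards
`v` is a common ancestor below that root, so minimality pins it down to the root itself.
-/

theorem List.exists_prefix_getLast?_eq_first_mem {V : Type*} (S : Set V) {L : List V}
    (h : ∃ x ∈ L, x ∈ S) :
    ∃ L₁, L₁ <+: L ∧ ∃ l ∈ S, L₁.getLast? = some l ∧ ∀ x ∈ L₁, x ∈ S → x = l := by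
  induction L with
  | nil => simp at h
  | cons c t ih =>
    by_cases hc : c ∈ S
    · exact ⟨[c], by simp, c, hc, rfl, by simp⟩
    · obtain ⟨L₁, hpre, l, hl, hlast, hfirst⟩ := ih (by simpa [hc] using h)
      refine ⟨c :: L₁, List.prefix_cons_inj c |>.mpr hpre, l, hl, ?_, ?_⟩
      · simp [List.getLast?_cons, hlast]
      · intro x hx hxS
        rcases List.mem_cons.mp hx with rfl | hx
        · exact absurd hxS hc
        · exact hfirst x hx hxS

namespace DirPath

variable {V : Type*} {E : V → V → Prop} {a b x : V}

theorem start_mem (p : DirPath E a b) : a ∈ p.vset := by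
  obtain ⟨t, ht⟩ := List.head?_eq_some_iff.mp p.head_eq
  simp [vset, ht]

theorem end_mem (p : DirPath E a b) : b ∈ p.vset :=
  List.mem_of_getLast? p.last_eq

theorem source_reaches (p : DirPath E a b) (hx : x ∈ p.vset) : Relation.ReflTransGen E a x :=
  List.IsChain.induction (Relation.ReflTransGen E a ·) p.verts p.chain
    (fun _ _ h hy => hy.tail h)
    (fun hne => by rw [(List.head_eq_iff_head?_eq_some hne).mpr p.head_eq]) x hx

theorem reaches_target (p : DirPath E a b) (hx : x ∈ p.vset) : Relation.ReflTransGen E x b :=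
  List.IsChain.backwards_induction (Relation.ReflTransGen E · b) p.verts p.chain
    (fun _ _ h hy => hy.head h)
    (fun hne => by rw [(List.getLast_eq_iff_getLast?_eq_some hne).mpr p.last_eq]) x hx

theorem reflTransGen (p : DirPath E a b) : Relation.ReflTransGen E a b :=
  p.source_reaches p.end_mem

theorem nonempty_of_reflTransGen (h : Relation.ReflTransGen E a b) :
    Nonempty (DirPath E a b) := by
  obtain ⟨t, hchain, hlast⟩ := List.exists_isChain_cons_of_relationReflTransGen h
  exact ⟨⟨a :: t, List.cons_ne_nil _ _, rfl,
    (List.getLast_eq_iff_getLast?_eq_some _).mp hlast, hchain⟩⟩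

theorem exists_prefix_first_mem (p : DirPath E a b) {S : Set V} (h : (p.vset ∩ S).Nonempty) :
    ∃ l ∈ S, ∃ q : DirPath E a l, q.vset ⊆ p.vset ∧ q.vset ∩ S = {l} := by
  obtain ⟨L₁, hpre, l, hl, hlast, hfirst⟩ :=
    List.exists_prefix_getLast?_eq_first_mem S (L := p.verts) h
  have hne : L₁ ≠ [] := by rintro rfl; simp at hlast
  have hhead : L₁.head? = some a := by
    rw [← List.head_eq_iff_head?_eq_some hne, hpre.head hne, List.head_eq_iff_head?_eq_some]
    exact p.head_eq
  let q : DirPath E a l := ⟨L₁, hne, hhead, hlast, List.IsChain.prefix p.chain hpre⟩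
  refine ⟨l, hl, q, fun x hx => hpre.subset hx, ?_⟩
  refine Set.Subset.antisymm (fun x ⟨hx, hxS⟩ => hfirst x hx hxS) ?_
  rintro _ rfl
  exact ⟨q.end_mem, hl⟩

end DirPath

theorem exists_dirPaths_inter_eq_singleton {V : Type*} {E : V → V → Prop} {z z' u : V}
    (hz : Relation.ReflTransGen E z u) (hz' : Relation.ReflTransGen E z' u) :
    ∃ l, ∃ (p : DirPath E z l) (q : DirPath E z' l),
      p.vset ∩ q.vset = {l} ∧ Relation.ReflTransGen E l u := by
  obtain ⟨P⟩ := DirPath.nonempty_of_reflTransGen hz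
  obtain ⟨Q⟩ := DirPath.nonempty_of_reflTransGen hz'
  obtain ⟨l, hlQ, p, -, hpQ⟩ := P.exists_prefix_first_mem ⟨u, P.end_mem, Q.end_mem⟩
  obtain ⟨l₀, hl₀, q, hqQ, -⟩ := Q.exists_prefix_first_mem (S := {l}) ⟨l, hlQ, rfl⟩
  subst l₀
  refine ⟨l, p, q, Set.Subset.antisymm ?_ ?_, Q.reaches_target hlQ⟩
  · exact hpQ ▸ Set.inter_subset_inter_right _ hqQ
  · rintro _ rfl
    exact ⟨p.end_mem, q.end_mem⟩

theorem exists_minimal_wrt_reflTransGen {V : Type*} [Finite V] {E : V → V → Prop}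
    (hacyc : ∀ u v : V, Relation.ReflTransGen E u v → Relation.ReflTransGen E v u → u = v)
    {S : Set V} (hS : S.Nonempty) :
    ∃ z ∈ S, ∀ w ∈ S, Relation.ReflTransGen E z w → w = z := by
  let below : V → V → Prop := fun a b => Relation.ReflTransGen E b a ∧ a ≠ b
  have : IsTrans V below := ⟨fun _ _ _ ⟨hba, _⟩ ⟨hcb, hbc⟩ =>
    ⟨hcb.trans hba, by rintro rfl; exact hbc (hacyc _ _ hba hcb)⟩⟩
  have : Std.Irrefl below := ⟨fun _ h => h.2 rfl⟩
  obtain ⟨z, hzS, hmin⟩ := (Finite.wellFounded_of_trans_of_irrefl below).has_min S hS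
  exact ⟨z, hzS, fun w hw hzw => by_contra fun hwz => hmin w hw ⟨hzw, hwz⟩⟩

def IsMinCommonAncestor {V : Type*} (E : V → V → Prop) (u v z : V) : Prop :=
  (Relation.ReflTransGen E z u ∧ Relation.ReflTransGen E z v) ∧
    ∀ w : V, Relation.ReflTransGen E w u → Relation.ReflTransGen E w v →
      Relation.ReflTransGen E z w → w = z

namespace IsMinCommonAncestor

variable {V : Type*} {E : V → V → Prop} {u v z z' x y : V}

theorem symm (hz : IsMinCommonAncestor E u v z) : IsMinCommonAncestor E v u z :=
  ⟨hz.1.symm, fun w hwv hwu => hz.2 w hwu hwv⟩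

theorem eq_of_reflTransGen (hz : IsMinCommonAncestor E u v z)
    (hz' : IsMinCommonAncestor E u v z') (h : Relation.ReflTransGen E z z') : z' = z :=
  hz.2 z' hz'.1.1 hz'.1.2 h

theorem inter_vset_eq_singleton (hz : IsMinCommonAncestor E u v z)
    (p : DirPath E z x) (q : DirPath E z y)
    (hxu : Relation.ReflTransGen E x u) (hyv : Relation.ReflTransGen E y v) :
    p.vset ∩ q.vset = {z} := by
  refine Set.Subset.antisymm (fun w ⟨hwp, hwq⟩ => ?_) ?_
  · exact hz.2 w ((p.reaches_target hwp).trans hxu) ((q.reaches_target hwq).trans hyv)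
      (p.source_reaches hwp)
  · rintro _ rfl
    exact ⟨p.start_mem, q.start_mem⟩

theorem inter_vset_eq_empty (hz : IsMinCommonAncestor E u v z)
    (hz' : IsMinCommonAncestor E u v z') (hne : z ≠ z')
    (p : DirPath E z x) (q : DirPath E z' y)
    (hxu : Relation.ReflTransGen E x u) (hyv : Relation.ReflTransGen E y v) :
    p.vset ∩ q.vset = ∅ := by
  refine Set.eq_empty_of_forall_notMem fun w ⟨hwp, hwq⟩ => hne ?_
  have hwu := (p.reaches_target hwp).trans hxu
  have hwv := (q.reaches_target hwq).trans hyv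
  rw [← hz.2 w hwu hwv (p.source_reaches hwp), hz'.2 w hwu hwv (q.source_reaches hwq)]

end IsMinCommonAncestor

theorem hasK22Subdivision_of_isMinCommonAncestor {V : Type*} {E : V → V → Prop} {u v z z' : V}
    (hz : IsMinCommonAncestor E u v z) (hz' : IsMinCommonAncestor E u v z') (hne : z ≠ z') :
    HasK22Subdivision E := by
  obtain ⟨l, p₁, p₃, h₁₃, hlu⟩ := exists_dirPaths_inter_eq_singleton hz.1.1 hz'.1.1
  obtain ⟨l', p₂, p₄, h₂₄, hl'v⟩ := exists_dirPaths_inter_eq_singleton hz.1.2 hz'.1.2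
  have h₁₂ := hz.inter_vset_eq_singleton p₁ p₂ hlu hl'v
  have hzl : z ≠ l := by
    rintro rfl
    exact hne (hz'.eq_of_reflTransGen hz p₃.reflTransGen)
  have hzl' : z ≠ l' := by
    rintro rfl
    exact hne (hz'.eq_of_reflTransGen hz p₄.reflTransGen)
  have hz'l : z' ≠ l := by
    rintro rfl
    exact hne (hz.eq_of_reflTransGen hz' p₁.reflTransGen).symm
  have hz'l' : z' ≠ l' := by
    rintro rfl
    exact hne (hz.eq_of_reflTransGen hz' p₂.reflTransGen).symm
  have hll' : l ≠ l' := by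
    rintro rfl
    exact hzl (h₁₂.subset ⟨p₁.end_mem, p₂.end_mem⟩).symm
  refine ⟨z, z', l, l', p₁, p₂, p₃, p₄, hne, hll', hzl, hzl', hz'l, hz'l', h₁₂,
    hz'.inter_vset_eq_singleton p₃ p₄ hlu hl'v, h₁₃, h₂₄,
    hz.inter_vset_eq_empty hz' hne p₁ p₄ hlu hl'v, ?_⟩
  exact hz.symm.inter_vset_eq_empty hz'.symm hne p₂ p₃ hl'v hlu

/-- If a finite acyclic digraph in which every two vertices have a common
ancestor contains no `K_{2,2}`-subdivision, then every pair of vertices has a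
unique least common ancestor (minimal common ancestor w.r.t. reachability). -/
theorem unique_pairwise_lca_of_no_K22 {V : Type*} [Fintype V] (E : V → V → Prop)
    (hacyc : ∀ u v : V, Relation.ReflTransGen E u v → Relation.ReflTransGen E v u → u = v)
    (hanc : ∀ u v : V, ∃ w : V, Relation.ReflTransGen E w u ∧ Relation.ReflTransGen E w v)
    (hK : ¬ HasK22Subdivision E) :
    ∀ u v : V, ∃! z : V,
      (Relation.ReflTransGen E z u ∧ Relation.ReflTransGen E z v) ∧
      ∀ w : V, Relation.ReflTransGen E w u → Relation.ReflTransGen E w v →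
        Relation.ReflTransGen E z w → w = z := by
  intro u v
  obtain ⟨z, hz, hmin⟩ := exists_minimal_wrt_reflTransGen hacyc (hanc u v)
  have hzmin : IsMinCommonAncestor E u v z := ⟨hz, fun w hwu hwv => hmin w ⟨hwu, hwv⟩⟩
  refine ⟨z, hzmin, fun z' hz' => ?_⟩
  by_contra hne
  exact hK (hasK22Subdivision_of_isMinCommonAncestor hz' hzmin hne)
end
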